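/- Assume the running cost f satisfies Assumptions (A) and (B). Then the transformed HJB equation has at most one classical solution: if V̂₁ and V̂₂ are both continuously differentiable on a neighborhood of [0,T] × Ŝ_d, satisfy L̂[V̂₁] = L̂[V̂₂] = 0 on [0,T] × Ŝ_d, and satisfy V̂₁(T,·) = V̂₂(T,·) = Ĝ on Ŝ_d, then V̂₁ = V̂₂ on [0,T] × Ŝ_d. -/

import Mathlib

open scoped BigOperators RealInnerProductSpace Topology
noncomputable section

/-- The (d-1)-dimensional probability simplex in ℝ^d. -/
def simplexSet (d : ℕ) : Set (EuclideanSpace ℝ (Fin d)) :=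
  {m | (∀ i, 0 ≤ m i) ∧ ∑ i, m i = 1}

/-- The cube of admissible controls `[0,M]^d`. -/
def controlCube (d : ℕ) (M : ℝ) : Set (EuclideanSpace ℝ (Fin d)) :=
  {a | ∀ k, a k ∈ Set.Icc (0:ℝ) M}

/-- The Hamiltonian `H^i(t,m,z) = sup_{a ∈ [0,M]^d} ( -∑_{k≠i} a_k z_k - f(t,i,a,m) )`. -/
def Ham (d : ℕ) (M : ℝ)
    (f : ℝ → Fin d → EuclideanSpace ℝ (Fin d) → EuclideanSpace ℝ (Fin d) → ℝ)
    (i : Fin d) (t : ℝ) (m : EuclideanSpace ℝ (Fin d)) (z : EuclideanSpace ℝ (Fin d)) : ℝ :=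
  sSup ((fun a : EuclideanSpace ℝ (Fin d) =>
    -∑ k ∈ Finset.univ.erase i, a k * z k - f t i a m) '' controlCube d M)

/-- The projected simplex `Ŝ_d ⊂ ℝ^{d-1}`. -/
def hatSimplexSet (d : ℕ) : Set (EuclideanSpace ℝ (Fin (d - 1))) :=
  {η | (∀ j, 0 ≤ η j) ∧ ∑ j, η j ≤ 1}

/-- The embedding `η ↦ (η, η^{-d})` of `Ŝ_d` into `S_d`, where `η^{-d} = 1 - ∑_j η_j`. -/
def embedSimplex (d : ℕ) (η : EuclideanSpace ℝ (Fin (d - 1))) : EuclideanSpace ℝ (Fin d) :=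
  (EuclideanSpace.equiv (Fin d) ℝ).symm fun j =>
    if hj : (j : ℕ) < d - 1 then η ⟨j, hj⟩ else 1 - ∑ k, η k

/-- The lift of a gradient `p ∈ ℝ^{d-1}` appearing in the modified Hamiltonians: for
`i < d-1` it is `(p_1 - p_i, …, p_{d-1} - p_i, -p_i)`, and for `i = d` it is `(p, 0)`. -/
def liftVecAll (d : ℕ) (i : Fin d) (p : EuclideanSpace ℝ (Fin (d - 1))) :
    EuclideanSpace ℝ (Fin d) :=
  (EuclideanSpace.equiv (Fin d) ℝ).symm fun j =>
    if hi : (i : ℕ) < d - 1 then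
      (if hj : (j : ℕ) < d - 1 then p ⟨j, hj⟩ else 0) - p ⟨i, hi⟩
    else
      if hj : (j : ℕ) < d - 1 then p ⟨j, hj⟩ else 0

/-- The modified Hamiltonians `Ĥ^i(t,η,p)` on `[0,T] × Ŝ_d × ℝ^{d-1}`. -/
def hatHam (d : ℕ) (M : ℝ)
    (f : ℝ → Fin d → EuclideanSpace ℝ (Fin d) → EuclideanSpace ℝ (Fin d) → ℝ)
    (i : Fin d) (t : ℝ) (η : EuclideanSpace ℝ (Fin (d - 1)))
    (p : EuclideanSpace ℝ (Fin (d - 1))) : ℝ :=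
  Ham d M f i t (embedSimplex d η) (liftVecAll d i p)

/-- The transformed HJB operator
`L̂[φ](t,η) = -∂_t φ(t,η) + ∑_{i<d} (η,η^{-d})_i Ĥ^i(t,η,∇_η φ(t,η))`. -/
def hatHJBop (d : ℕ) (M : ℝ)
    (f : ℝ → Fin d → EuclideanSpace ℝ (Fin d) → EuclideanSpace ℝ (Fin d) → ℝ)
    (φ : ℝ → EuclideanSpace ℝ (Fin (d - 1)) → ℝ) (t : ℝ)
    (η : EuclideanSpace ℝ (Fin (d - 1))) : ℝ :=
  -(deriv (fun s => φ s η) t) +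
    ∑ i, embedSimplex d η i * hatHam d M f i t η (gradient (φ t) η)

/-- The transformed terminal condition `Ĝ(η) = ∑_i (η,η^{-d})_i g^i(η,η^{-d})`. -/
def hatG (d : ℕ) (g : Fin d → EuclideanSpace ℝ (Fin d) → ℝ)
    (η : EuclideanSpace ℝ (Fin (d - 1))) : ℝ :=
  ∑ i, embedSimplex d η i * g i (embedSimplex d η)

/-- `h` is continuously differentiable on an open neighborhood of `[0,T] × Ŝ_d`. -/
def hatC1OnNbhd (d : ℕ) (T : ℝ) (h : ℝ → EuclideanSpace ℝ (Fin (d - 1)) → ℝ) : Prop :=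
  ∃ U : Set (ℝ × EuclideanSpace ℝ (Fin (d - 1))), IsOpen U ∧
    Set.Icc (0:ℝ) T ×ˢ hatSimplexSet d ⊆ U ∧ ContDiffOn ℝ 1 (fun p => h p.1 p.2) U

/-- Assumption (A): `F(t,a,m) = ∑_i m_i f(t,i,a^i,m)` is continuous and Lipschitz in `(t,m)`,
uniformly in the controls. -/
def AssumptionA (d : ℕ) (T M : ℝ)
    (f : ℝ → Fin d → EuclideanSpace ℝ (Fin d) → EuclideanSpace ℝ (Fin d) → ℝ) : Prop :=
  Continuous (fun q : ℝ × (Fin d → EuclideanSpace ℝ (Fin d)) × EuclideanSpace ℝ (Fin d) =>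
    ∑ i, q.2.2 i * f q.1 i (q.2.1 i) q.2.2) ∧
  ∃ C : ℝ, 0 < C ∧ ∀ t ∈ Set.Icc (0:ℝ) T, ∀ s ∈ Set.Icc (0:ℝ) T,
    ∀ a : Fin d → EuclideanSpace ℝ (Fin d), (∀ i, a i ∈ controlCube d M) →
    ∀ m ∈ simplexSet d, ∀ p ∈ simplexSet d,
      |∑ i, m i * f t i (a i) m - ∑ i, p i * f s i (a i) p| ≤ C * (|t - s| + ‖m - p‖)

/-- Assumption (B): the running cost is continuously differentiable in the control, its
control-gradient is Lipschitz in `m`, and it is strongly convex in the control. -/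
def AssumptionB (d : ℕ) (T M : ℝ)
    (f : ℝ → Fin d → EuclideanSpace ℝ (Fin d) → EuclideanSpace ℝ (Fin d) → ℝ) : Prop :=
  (∀ i : Fin d, ∀ t ∈ Set.Icc (0:ℝ) T, ∀ m ∈ simplexSet d,
    ContDiff ℝ 1 (fun a => f t i a m)) ∧
  (∃ L : ℝ, 0 < L ∧ ∀ i : Fin d, ∀ t ∈ Set.Icc (0:ℝ) T, ∀ a ∈ controlCube d M,
    ∀ m ∈ simplexSet d, ∀ p ∈ simplexSet d,
      ‖gradient (fun a' => f t i a' m) a - gradient (fun a' => f t i a' p) a‖ ≤ L * ‖m - p‖) ∧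
  (∃ lam : ℝ, 0 < lam ∧ ∀ i : Fin d, ∀ t ∈ Set.Icc (0:ℝ) T, ∀ m ∈ simplexSet d,
    ∀ a ∈ controlCube d M, ∀ b ∈ controlCube d M,
      f t i b m ≥ f t i a m + ⟪gradient (fun a' => f t i a' m) a, b - a⟫ + lam * ‖b - a‖ ^ 2)

section Helpers

lemma slope_nonpos {h : ℝ → ℝ} {a x : ℝ} (hd : HasDerivAt h a x)
    (hm : ∀ᶠ s in nhdsWithin x (Set.Ioi x), h s ≤ h x) : a ≤ 0 := by
  have hs := hasDerivAt_iff_tendsto_slope.mp hd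
  have hs' : Filter.Tendsto (slope h x) (nhdsWithin x (Set.Ioi x)) (nhds a) :=
    hs.mono_left (nhdsWithin_mono x (by intro y hy; exact ne_of_gt hy))
  refine le_of_tendsto hs' ?_
  filter_upwards [hm, self_mem_nhdsWithin] with s hs1 hs2
  rw [slope_def_field]
  exact div_nonpos_of_nonpos_of_nonneg (by linarith)
    (by simp only [sub_nonneg]; exact le_of_lt hs2)

lemma cube_compact (n : ℕ) (lo hi : ℝ) :
    IsCompact {a : EuclideanSpace ℝ (Fin n) | ∀ k, a k ∈ Set.Icc lo hi} := by
  have h : {a : EuclideanSpace ℝ (Fin n) | ∀ k, a k ∈ Set.Icc lo hi} =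
      (EuclideanSpace.equiv (Fin n) ℝ).toHomeomorph ⁻¹' (Set.univ.pi fun _ => Set.Icc lo hi) := by
    ext a
    rw [Set.mem_preimage, Set.mem_univ_pi]
    rfl
  rw [h, (EuclideanSpace.equiv (Fin n) ℝ).toHomeomorph.isCompact_preimage]
  exact isCompact_univ_pi fun _ => isCompact_Icc

lemma controlCube_compact (d : ℕ) (M : ℝ) : IsCompact (controlCube d M) := cube_compact d 0 M

lemma hatSimplex_compact (d : ℕ) : IsCompact (hatSimplexSet d) := by
  refine (cube_compact (d-1) 0 1).of_isClosed_subset ?_ ?_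
  · have h1 : IsClosed {η : EuclideanSpace ℝ (Fin (d-1)) | ∀ j, 0 ≤ η j} := by
      have : {η : EuclideanSpace ℝ (Fin (d-1)) | ∀ j, 0 ≤ η j} = ⋂ j, {η | 0 ≤ η j} := by ext; simp
      rw [this]
      exact isClosed_iInter fun j => isClosed_le continuous_const (EuclideanSpace.proj j).continuous
    have h2 : IsClosed {η : EuclideanSpace ℝ (Fin (d-1)) | ∑ j, η j ≤ 1} :=
      isClosed_le (continuous_finset_sum _ fun j _ => (EuclideanSpace.proj j).continuous)
        continuous_const
    exact h1.inter h2
  · intro η hη k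
    refine ⟨hη.1 k, ?_⟩
    calc η k ≤ ∑ j, η j := Finset.single_le_sum (fun j _ => hη.1 j) (Finset.mem_univ k)
    _ ≤ 1 := hη.2

lemma sum_erase_comm (n : ℕ) (g : Fin n → Fin n → ℝ) :
    ∑ i, ∑ k ∈ Finset.univ.erase i, g i k = ∑ k, ∑ i ∈ Finset.univ.erase k, g i k := by
  calc ∑ i, ∑ k ∈ Finset.univ.erase i, g i k
      = ∑ i, ((∑ k, g i k) - g i i) :=
        Finset.sum_congr rfl fun i _ => Finset.sum_erase_eq_sub (Finset.mem_univ i)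
    _ = (∑ i, ∑ k, g i k) - ∑ i, g i i := Finset.sum_sub_distrib _ _
    _ = (∑ k, ∑ i, g i k) - ∑ k, g k k := by rw [Finset.sum_comm]
    _ = ∑ k, ((∑ i, g i k) - g k k) := (Finset.sum_sub_distrib _ _).symm
    _ = ∑ k, ∑ i ∈ Finset.univ.erase k, g i k :=
        Finset.sum_congr rfl fun k _ => (Finset.sum_erase_eq_sub (Finset.mem_univ k)).symm

lemma key_algebra (n : ℕ) (m u : Fin n → ℝ) (A : Fin n → Fin n → ℝ) :
    ∑ i, m i * (∑ k ∈ Finset.univ.erase i, A i k * (u k - u i))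
      = ∑ k, u k * ((∑ i ∈ Finset.univ.erase k, m i * A i k)
          - m k * ∑ j ∈ Finset.univ.erase k, A k j) := by
  have h1 : ∀ i, m i * (∑ k ∈ Finset.univ.erase i, A i k * (u k - u i))
      = (∑ k ∈ Finset.univ.erase i, m i * A i k * u k)
        - u i * (m i * ∑ k ∈ Finset.univ.erase i, A i k) := by
    intro i
    rw [Finset.mul_sum, Finset.mul_sum, Finset.mul_sum, ← Finset.sum_sub_distrib]
    apply Finset.sum_congr rfl
    intro k _
    ring
  calc ∑ i, m i * (∑ k ∈ Finset.univ.erase i, A i k * (u k - u i))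
      = ∑ i, ((∑ k ∈ Finset.univ.erase i, m i * A i k * u k)
          - u i * (m i * ∑ k ∈ Finset.univ.erase i, A i k)) := Finset.sum_congr rfl fun i _ => h1 i
    _ = (∑ i, ∑ k ∈ Finset.univ.erase i, m i * A i k * u k)
          - ∑ i, u i * (m i * ∑ k ∈ Finset.univ.erase i, A i k) := Finset.sum_sub_distrib _ _
    _ = (∑ k, ∑ i ∈ Finset.univ.erase k, m i * A i k * u k)
          - ∑ k, u k * (m k * ∑ j ∈ Finset.univ.erase k, A k j) := by
        rw [sum_erase_comm n (fun i k => m i * A i k * u k)]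
    _ = ∑ k, u k * ((∑ i ∈ Finset.univ.erase k, m i * A i k)
          - m k * ∑ j ∈ Finset.univ.erase k, A k j) := by
        rw [← Finset.sum_sub_distrib]
        apply Finset.sum_congr rfl
        intro k _
        rw [mul_sub]
        congr 1
        rw [Finset.mul_sum]
        exact Finset.sum_congr rfl fun i _ => by ring

end Helpers
section Helpers2

lemma ham_lower (d : ℕ) (M : ℝ) (hM : 0 ≤ M)
    (f : ℝ → Fin d → EuclideanSpace ℝ (Fin d) → EuclideanSpace ℝ (Fin d) → ℝ)
    (i : Fin d) (t : ℝ) (m : EuclideanSpace ℝ (Fin d))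
    (hcont : Continuous fun a => f t i a m) (z : EuclideanSpace ℝ (Fin d)) :
    ∃ a ∈ controlCube d M,
      (Ham d M f i t m z = -∑ k ∈ Finset.univ.erase i, a k * z k - f t i a m) ∧
      ∀ z' : EuclideanSpace ℝ (Fin d),
        -∑ k ∈ Finset.univ.erase i, a k * z' k - f t i a m ≤ Ham d M f i t m z' := by
  have hne : (controlCube d M).Nonempty := ⟨0, fun k => by
    constructor <;> simp [hM]⟩
  have hobj : ∀ z' : EuclideanSpace ℝ (Fin d), Continuous fun a : EuclideanSpace ℝ (Fin d) =>
      -∑ k ∈ Finset.univ.erase i, a k * z' k - f t i a m := by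
    intro z'
    apply Continuous.sub _ hcont
    apply Continuous.neg
    exact continuous_finset_sum _ fun k _ => (EuclideanSpace.proj k).continuous.mul continuous_const
  obtain ⟨a, ha, hmax⟩ := (controlCube_compact d M).exists_isMaxOn hne ((hobj z).continuousOn)
  refine ⟨a, ha, ?_, ?_⟩
  · apply IsGreatest.csSup_eq
    constructor
    · exact Set.mem_image_of_mem _ ha
    · rintro y ⟨b, hb, rfl⟩
      exact hmax hb
  · intro z'
    exact le_csSup ((controlCube_compact d M).image (hobj z')).bddAbove
      (Set.mem_image_of_mem _ ha)

lemma liftVecAll_apply (d : ℕ) (i k : Fin d) (p : EuclideanSpace ℝ (Fin (d-1))) :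
    liftVecAll d i p k = (if h : (k:ℕ) < d-1 then p ⟨k,h⟩ else 0)
      - (if h : (i:ℕ) < d-1 then p ⟨i,h⟩ else 0) := by
  by_cases hi : (i:ℕ) < d-1
  · show dite _ _ _ = _
    rw [dif_pos hi, dif_pos hi]
  · show dite _ _ _ = _
    rw [dif_neg hi, dif_neg hi, sub_zero]

lemma embed_apply_lt (d' : ℕ) (η : EuclideanSpace ℝ (Fin d')) (j : Fin d') :
    embedSimplex (d'+1) η (Fin.castSucc j) = η j := by
  show dite _ _ _ = _
  simp only [Nat.add_sub_cancel]
  rw [dif_pos (by simpa using j.isLt : ((Fin.castSucc j : Fin (d'+1)) : ℕ) < d')]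
  exact congrArg η (Fin.ext (by simp))

lemma embed_apply_last (d' : ℕ) (η : EuclideanSpace ℝ (Fin d')) :
    embedSimplex (d'+1) η (Fin.last d') = 1 - ∑ j, η j := by
  show dite _ _ _ = _
  simp only [Nat.add_sub_cancel]
  rw [dif_neg (by simp)]
  rfl

lemma embed_nonneg (d' : ℕ) (η : EuclideanSpace ℝ (Fin d')) (hη : η ∈ hatSimplexSet (d'+1)) :
    ∀ k, 0 ≤ embedSimplex (d'+1) η k := by
  intro k
  show (0:ℝ) ≤ dite _ _ _
  simp only [Nat.add_sub_cancel]
  by_cases hk : (k:ℕ) < d'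
  · rw [dif_pos hk]; exact hη.1 _
  · rw [dif_neg hk]; simpa [sub_nonneg] using hη.2

lemma embed_mem_simplex (d' : ℕ) (η : EuclideanSpace ℝ (Fin d')) (hη : η ∈ hatSimplexSet (d'+1)) :
    embedSimplex (d'+1) η ∈ simplexSet (d'+1) := by
  refine ⟨embed_nonneg d' η hη, ?_⟩
  rw [Fin.sum_univ_castSucc]
  rw [embed_apply_last]
  have : ∀ j : Fin d', embedSimplex (d'+1) η (Fin.castSucc j) = η j := embed_apply_lt d' η
  rw [Finset.sum_congr rfl fun j _ => this j]
  ring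

end Helpers2
section Helpers3

lemma pack (d : ℕ) (T : ℝ) (V : ℝ → EuclideanSpace ℝ (Fin (d-1)) → ℝ)
    (hV : hatC1OnNbhd d T V) (t : ℝ) (η : EuclideanSpace ℝ (Fin (d-1)))
    (ht : t ∈ Set.Icc (0:ℝ) T) (hη : η ∈ hatSimplexSet d) :
    ∃ L : ℝ × EuclideanSpace ℝ (Fin (d-1)) →L[ℝ] ℝ,
      HasDerivAt (fun s => V s η) (L (1, 0)) t ∧
      (∀ v, ⟪gradient (V t) η, v⟫ = L (0, v)) ∧
      (∀ v, HasDerivAt (fun s : ℝ => V t (η + s • v)) (L (0, v)) (0:ℝ)) := by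
  obtain ⟨U, hUo, hUsub, hcd⟩ := hV
  have hmem : (t, η) ∈ U := hUsub ⟨ht, hη⟩
  have hdiff : DifferentiableAt ℝ (fun p : ℝ × EuclideanSpace ℝ (Fin (d-1)) => V p.1 p.2) (t, η) :=
    (hcd.differentiableOn one_ne_zero).differentiableAt (hUo.mem_nhds hmem)
  set L := fderiv ℝ (fun p : ℝ × EuclideanSpace ℝ (Fin (d-1)) => V p.1 p.2) (t, η) with hLdef
  have hL : HasFDerivAt (fun p : ℝ × EuclideanSpace ℝ (Fin (d-1)) => V p.1 p.2) L (t, η) :=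
    hdiff.hasFDerivAt
  refine ⟨L, ?_, ?_, ?_⟩
  · have hc : HasDerivAt (fun s : ℝ => ((s, η) : ℝ × EuclideanSpace ℝ (Fin (d-1)))) (1, 0) t :=
      HasDerivAt.prodMk (hasDerivAt_id t) (hasDerivAt_const t η)
    exact hL.comp_hasDerivAt t hc
  · have hc2 : HasFDerivAt (fun y : EuclideanSpace ℝ (Fin (d-1)) => ((t, y) : ℝ × EuclideanSpace ℝ (Fin (d-1))))
        (ContinuousLinearMap.prod (0 : EuclideanSpace ℝ (Fin (d-1)) →L[ℝ] ℝ)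
          (ContinuousLinearMap.id ℝ (EuclideanSpace ℝ (Fin (d-1))))) η :=
      HasFDerivAt.prodMk (hasFDerivAt_const t η) (hasFDerivAt_id η)
    have hG : HasFDerivAt (V t)
        (L.comp (ContinuousLinearMap.prod (0 : EuclideanSpace ℝ (Fin (d-1)) →L[ℝ] ℝ)
          (ContinuousLinearMap.id ℝ (EuclideanSpace ℝ (Fin (d-1)))))) η :=
      hL.comp η hc2
    intro v
    rw [(hasFDerivAt_iff_hasGradientAt.mp hG).gradient]
    rw [InnerProductSpace.toDual_symm_apply]
    simp
  · intro v
    have hc2 : HasFDerivAt (fun y : EuclideanSpace ℝ (Fin (d-1)) => ((t, y) : ℝ × EuclideanSpace ℝ (Fin (d-1))))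
        (ContinuousLinearMap.prod (0 : EuclideanSpace ℝ (Fin (d-1)) →L[ℝ] ℝ)
          (ContinuousLinearMap.id ℝ (EuclideanSpace ℝ (Fin (d-1))))) η :=
      HasFDerivAt.prodMk (hasFDerivAt_const t η) (hasFDerivAt_id η)
    have hG : HasFDerivAt (V t)
        (L.comp (ContinuousLinearMap.prod (0 : EuclideanSpace ℝ (Fin (d-1)) →L[ℝ] ℝ)
          (ContinuousLinearMap.id ℝ (EuclideanSpace ℝ (Fin (d-1)))))) η :=
      hL.comp η hc2
    have hline : HasDerivAt (fun s : ℝ => η + s • v) v 0 := by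
      simpa using ((hasDerivAt_id (0:ℝ)).smul_const v).const_add η
    have h0 : η + (0:ℝ) • v = η := by simp
    have hG' : HasFDerivAt (V t)
        (L.comp (ContinuousLinearMap.prod (0 : EuclideanSpace ℝ (Fin (d-1)) →L[ℝ] ℝ)
          (ContinuousLinearMap.id ℝ (EuclideanSpace ℝ (Fin (d-1)))))) (η + (0:ℝ) • v) := by
      rw [h0]; exact hG
    have hres := hG'.comp_hasDerivAt 0 hline
    exact hres

lemma inner_eq_sum (n : ℕ) (x y : EuclideanSpace ℝ (Fin n)) :
    ⟪x, y⟫ = ∑ j, x j * y j := by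
  simp [PiLp.inner_apply, RCLike.inner_apply, conj_trivial]
  exact Finset.sum_congr rfl fun _ _ => mul_comm _ _

lemma eventually_feasible (d' : ℕ) (η v : EuclideanSpace ℝ (Fin d'))
    (hη : η ∈ hatSimplexSet (d'+1))
    (h1 : ∀ j, η j = 0 → 0 ≤ v j) (h2 : ∑ j, η j = 1 → ∑ j, v j ≤ 0) :
    ∀ᶠ s in nhdsWithin (0:ℝ) (Set.Ioi 0), η + s • v ∈ hatSimplexSet (d'+1) := by
  have hη1 : ∀ j : Fin d', 0 ≤ η j := fun j => hη.1 j
  have hη2 : (∑ j : Fin d', η j) ≤ 1 := hη.2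
  have hcoord : ∀ j : Fin d', ∀ᶠ s in nhdsWithin (0:ℝ) (Set.Ioi 0), 0 ≤ (η + s • v) j := by
    intro j
    rcases eq_or_lt_of_le (hη1 j) with h | h
    · filter_upwards [self_mem_nhdsWithin] with s hs
      have : (η + s • v) j = η j + s * v j := rfl
      rw [this, ← h]
      have := h1 j h.symm
      nlinarith [Set.mem_Ioi.mp hs]
    · have hcont : Filter.Tendsto (fun s : ℝ => η j + s * v j) (nhds 0) (nhds (η j)) := by
        have : Filter.Tendsto (fun s : ℝ => η j + s * v j) (nhds 0) (nhds (η j + 0 * v j)) :=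
          (tendsto_const_nhds.add ((continuous_id.mul continuous_const).tendsto 0))
        simpa using this
      have := hcont.eventually (eventually_gt_nhds h)
      filter_upwards [nhdsWithin_le_nhds this] with s hs
      have he : (η + s • v) j = η j + s * v j := rfl
      rw [he]; linarith [hs]
  have hsum : ∀ᶠ s in nhdsWithin (0:ℝ) (Set.Ioi 0), ∑ j, (η + s • v) j ≤ 1 := by
    have hexp : ∀ s : ℝ, ∑ j, (η + s • v) j = (∑ j, η j) + s * ∑ j, v j := by
      intro s
      rw [Finset.mul_sum, ← Finset.sum_add_distrib]
      rfl
    rcases eq_or_lt_of_le hη2 with h | h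
    · filter_upwards [self_mem_nhdsWithin] with s hs
      rw [hexp s, h]
      have := h2 h
      nlinarith [Set.mem_Ioi.mp hs]
    · have hcont : Filter.Tendsto (fun s : ℝ => (∑ j, η j) + s * ∑ j, v j) (nhds 0)
          (nhds (∑ j, η j)) := by
        have : Filter.Tendsto (fun s : ℝ => (∑ j, η j) + s * ∑ j, v j) (nhds 0)
            (nhds ((∑ j, η j) + 0 * ∑ j, v j)) :=
          (tendsto_const_nhds.add ((continuous_id.mul continuous_const).tendsto 0))
        simpa using this
      have := hcont.eventually (eventually_lt_nhds h)
      filter_upwards [nhdsWithin_le_nhds this] with s hs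
      rw [hexp s]; linarith [hs]
  filter_upwards [Filter.eventually_all.mpr hcoord, hsum] with s hs1 hs2
  exact ⟨fun j => hs1 j, hs2⟩

end Helpers3
section KeyLemma

lemma key (d' : ℕ) (T : ℝ) (hT : 0 < T) (M : ℝ) (hM : 0 < M)
    (f : ℝ → Fin (d'+1) → EuclideanSpace ℝ (Fin (d'+1)) → EuclideanSpace ℝ (Fin (d'+1)) → ℝ)
    (hf : ∀ (i : Fin (d'+1)) (t : ℝ), t ∈ Set.Icc (0:ℝ) T → ∀ m ∈ simplexSet (d'+1),
      Continuous (fun a => f t i a m))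
    (V₁ V₂ : ℝ → EuclideanSpace ℝ (Fin (d'+1-1)) → ℝ)
    (hV₁ : hatC1OnNbhd (d'+1) T V₁) (hV₂ : hatC1OnNbhd (d'+1) T V₂)
    (hV₁pde : ∀ t ∈ Set.Icc (0:ℝ) T, ∀ η ∈ hatSimplexSet (d'+1), hatHJBop (d'+1) M f V₁ t η = 0)
    (hV₂pde : ∀ t ∈ Set.Icc (0:ℝ) T, ∀ η ∈ hatSimplexSet (d'+1), hatHJBop (d'+1) M f V₂ t η = 0)
    (hterm : ∀ η ∈ hatSimplexSet (d'+1), V₁ T η = V₂ T η) :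
    ∀ t ∈ Set.Icc (0:ℝ) T, ∀ η ∈ hatSimplexSet (d'+1), V₁ t η ≤ V₂ t η := by
  intro t₀ ht₀ η₀ hη₀
  have hsuf : ∀ ε : ℝ, 0 < ε → V₁ t₀ η₀ - V₂ t₀ η₀ ≤ ε * (T - t₀) := by
    intro ε hε
    set ψ : ℝ × EuclideanSpace ℝ (Fin (d'+1-1)) → ℝ :=
      fun p => V₁ p.1 p.2 - V₂ p.1 p.2 - ε * (T - p.1) with hψdef
    set K : Set (ℝ × EuclideanSpace ℝ (Fin (d'+1-1))) :=
      Set.Icc (0:ℝ) T ×ˢ hatSimplexSet (d'+1) with hKdef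
    have hKc : IsCompact K := isCompact_Icc.prod (hatSimplex_compact (d'+1))
    have hV₁' := hV₁; have hV₂' := hV₂
    obtain ⟨U₁, hU₁o, hU₁s, hU₁cd⟩ := hV₁'
    obtain ⟨U₂, hU₂o, hU₂s, hU₂cd⟩ := hV₂'
    have hψc : ContinuousOn ψ K := by
      apply ContinuousOn.sub
      apply ContinuousOn.sub
      · exact hU₁cd.continuousOn.mono hU₁s
      · exact hU₂cd.continuousOn.mono hU₂s
      · exact (continuous_const.mul (continuous_const.sub continuous_fst)).continuousOn
    obtain ⟨⟨t₁, η₁⟩, hzK, hzmax⟩ :=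
      hKc.exists_isMaxOn ⟨(t₀, η₀), ⟨ht₀, hη₀⟩⟩ hψc
    have ht₁ : t₁ ∈ Set.Icc (0:ℝ) T := hzK.1
    have hη₁ : η₁ ∈ hatSimplexSet (d'+1) := hzK.2
    suffices hψmax : ψ (t₁, η₁) ≤ 0 by
      have h0 := hzmax (⟨ht₀, hη₀⟩ : (t₀, η₀) ∈ K)
      simp only [hψdef, Set.mem_setOf_eq] at h0 hψmax
      linarith [h0, hψmax]
    by_contra hpos
    push_neg at hpos
    have ht₁T : t₁ < T := by
      rcases lt_or_eq_of_le ht₁.2 with h | h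
      · exact h
      · exfalso
        have : ψ (t₁, η₁) = 0 := by
          simp only [hψdef, h]
          rw [hterm η₁ hη₁]
          ring
        linarith
    obtain ⟨L₁, hL₁t, hL₁g, hL₁d⟩ := pack (d'+1) T V₁ hV₁ t₁ η₁ ht₁ hη₁
    obtain ⟨L₂, hL₂t, hL₂g, hL₂d⟩ := pack (d'+1) T V₂ hV₂ t₁ η₁ ht₁ hη₁
    -- time direction
    have hmono_t : ∀ᶠ s in nhdsWithin t₁ (Set.Ioi t₁), ψ (s, η₁) ≤ ψ (t₁, η₁) := by
      have hIoo : Set.Ioo t₁ T ∈ nhdsWithin t₁ (Set.Ioi t₁) :=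
        Ioo_mem_nhdsGT_of_mem ⟨le_refl t₁, ht₁T⟩
      filter_upwards [hIoo] with s hs
      exact hzmax ⟨⟨le_trans ht₁.1 hs.1.le, hs.2.le⟩, hη₁⟩
    have hderiv_t : HasDerivAt (fun s => ψ (s, η₁)) (L₁ (1, 0) - L₂ (1, 0) + ε) t₁ := by
      have h3 : HasDerivAt (fun s : ℝ => ε * (T - s)) (-ε) t₁ := by
        simpa using ((hasDerivAt_id t₁).const_sub T).const_mul ε
      have h4 := (hL₁t.sub hL₂t).sub h3
      simpa [hψdef, sub_neg_eq_add, Pi.sub_def] using h4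
    have key_t : L₁ (1, 0) - L₂ (1, 0) + ε ≤ 0 := slope_nonpos hderiv_t hmono_t
    -- notation
    set m : EuclideanSpace ℝ (Fin (d'+1)) := embedSimplex (d'+1) η₁ with hmdef
    set p₁ : EuclideanSpace ℝ (Fin (d'+1-1)) := gradient (V₁ t₁) η₁ with hp₁def
    set p₂ : EuclideanSpace ℝ (Fin (d'+1-1)) := gradient (V₂ t₁) η₁ with hp₂def
    have hm_simp : m ∈ simplexSet (d'+1) := embed_mem_simplex d' η₁ hη₁
    have hm_nonneg : ∀ k, 0 ≤ m k := embed_nonneg d' η₁ hη₁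
    -- PDE identities
    have hS₁ : ∑ i, m i * hatHam (d'+1) M f i t₁ η₁ p₁ = L₁ (1, 0) := by
      have h := hV₁pde t₁ ht₁ η₁ hη₁
      unfold hatHJBop at h
      rw [hL₁t.deriv] at h
      linarith
    have hS₂ : ∑ i, m i * hatHam (d'+1) M f i t₁ η₁ p₂ = L₂ (1, 0) := by
      have h := hV₂pde t₁ ht₁ η₁ hη₁
      unfold hatHJBop at h
      rw [hL₂t.deriv] at h
      linarith
    -- maximizers
    have hch : ∀ i : Fin (d'+1), ∃ a ∈ controlCube (d'+1) M,
        (Ham (d'+1) M f i t₁ m (liftVecAll (d'+1) i p₂)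
          = -∑ k ∈ Finset.univ.erase i, a k * (liftVecAll (d'+1) i p₂) k - f t₁ i a m) ∧
        ∀ z' : EuclideanSpace ℝ (Fin (d'+1)),
          -∑ k ∈ Finset.univ.erase i, a k * z' k - f t₁ i a m ≤ Ham (d'+1) M f i t₁ m z' :=
      fun i => ham_lower (d'+1) M hM.le f i t₁ m (hf i t₁ ht₁ m hm_simp) _
    choose A hA hAeq hAle using hch
    set tq : Fin (d'+1) → ℝ :=
      fun k => if h : (k:ℕ) < d'+1-1 then p₁ ⟨k, h⟩ - p₂ ⟨k, h⟩ else 0 with htqdef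
    -- per-i Hamiltonian inequality
    have hper : ∀ i : Fin (d'+1), -(∑ k ∈ Finset.univ.erase i, A i k * (tq k - tq i))
        ≤ hatHam (d'+1) M f i t₁ η₁ p₁ - hatHam (d'+1) M f i t₁ η₁ p₂ := by
      intro i
      have h1 : hatHam (d'+1) M f i t₁ η₁ p₂
          = -∑ k ∈ Finset.univ.erase i, A i k * (liftVecAll (d'+1) i p₂) k - f t₁ i (A i) m :=
        hAeq i
      have h2 : -∑ k ∈ Finset.univ.erase i, A i k * (liftVecAll (d'+1) i p₁) k - f t₁ i (A i) m
          ≤ hatHam (d'+1) M f i t₁ η₁ p₁ := hAle i _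
      have h3 : ∀ k, liftVecAll (d'+1) i p₁ k - liftVecAll (d'+1) i p₂ k = tq k - tq i := by
        intro k
        rw [liftVecAll_apply, liftVecAll_apply]
        simp only [htqdef, Nat.add_sub_cancel]
        by_cases hk : (k:ℕ) < d' <;> by_cases hi : (i:ℕ) < d' <;>
          simp [hk, hi] <;> ring
      have h4 : (∑ k ∈ Finset.univ.erase i, A i k * (liftVecAll (d'+1) i p₁) k)
            - ∑ k ∈ Finset.univ.erase i, A i k * (liftVecAll (d'+1) i p₂) k
          = ∑ k ∈ Finset.univ.erase i, A i k * (tq k - tq i) := by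
        rw [← Finset.sum_sub_distrib]
        apply Finset.sum_congr rfl
        intro k _
        rw [← h3 k]
        ring
      linarith
    -- weighted sum
    set vfun : Fin (d'+1) → ℝ := fun k =>
      (∑ i ∈ Finset.univ.erase k, m i * A i k) - m k * ∑ j ∈ Finset.univ.erase k, A k j
      with hvdef
    have halg : ∑ i, m i * (∑ k ∈ Finset.univ.erase i, A i k * (tq k - tq i))
        = ∑ k, tq k * vfun k := key_algebra (d'+1) (fun i => m i) tq (fun i k => A i k)
    have hsum_ineq : -(∑ k, tq k * vfun k) ≤ L₁ (1, 0) - L₂ (1, 0) := by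
      rw [← hS₁, ← hS₂, ← halg]
      have hstep : ∀ i ∈ Finset.univ, m i * (-(∑ k ∈ Finset.univ.erase i, A i k * (tq k - tq i)))
          ≤ m i * (hatHam (d'+1) M f i t₁ η₁ p₁ - hatHam (d'+1) M f i t₁ η₁ p₂) :=
        fun i _ => mul_le_mul_of_nonneg_left (hper i) (hm_nonneg i)
      have := Finset.sum_le_sum hstep
      calc -(∑ i, m i * ∑ k ∈ Finset.univ.erase i, A i k * (tq k - tq i))
          = ∑ i, m i * (-(∑ k ∈ Finset.univ.erase i, A i k * (tq k - tq i))) := by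
            rw [← Finset.sum_neg_distrib]
            exact Finset.sum_congr rfl fun i _ => by ring
        _ ≤ ∑ i, m i * (hatHam (d'+1) M f i t₁ η₁ p₁ - hatHam (d'+1) M f i t₁ η₁ p₂) := this
        _ = (∑ i, m i * hatHam (d'+1) M f i t₁ η₁ p₁)
            - ∑ i, m i * hatHam (d'+1) M f i t₁ η₁ p₂ := by
            rw [← Finset.sum_sub_distrib]
            exact Finset.sum_congr rfl fun i _ => by ring
    -- nonnegativity of v at active constraints
    have hvf_nonneg : ∀ k, m k = 0 → 0 ≤ vfun k := by
      intro k hk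
      simp only [hvdef, hk, zero_mul, sub_zero]
      apply Finset.sum_nonneg
      intro i _
      exact mul_nonneg (hm_nonneg i) (hA i k).1
    -- total sum of v is zero
    have hvtotal : ∑ k, vfun k = 0 := by
      simp only [hvdef]
      rw [Finset.sum_sub_distrib]
      rw [← sum_erase_comm (d'+1) (fun i k => m i * A i k)]
      rw [sub_eq_zero]
      apply Finset.sum_congr rfl
      intro i _
      rw [Finset.mul_sum]
    -- the direction in the hat simplex
    set v' : EuclideanSpace ℝ (Fin (d'+1-1)) :=
      (EuclideanSpace.equiv (Fin (d'+1-1)) ℝ).symm (fun j => vfun (Fin.castSucc j)) with hv'def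
    have hv'app : ∀ j : Fin (d'+1-1), v' j = vfun (Fin.castSucc j) := fun j => rfl
    have hv1 : ∀ j : Fin d', η₁ j = 0 → 0 ≤ v' j := by
      intro j hj
      rw [hv'app]
      apply hvf_nonneg
      rw [hmdef]
      rw [embed_apply_lt d' η₁ j]
      exact hj
    have hv2 : (∑ j : Fin d', η₁ j) = 1 → (∑ j : Fin d', v' j) ≤ 0 := by
      intro hs
      have hml : m (Fin.last d') = 0 := by
        rw [hmdef, embed_apply_last d' η₁]
        have h9 : (∑ j : Fin d', η₁ j) = 1 := hs
        rw [h9]; ring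
      have hsum' : (∑ j : Fin d', v' j) = (∑ k, vfun k) - vfun (Fin.last d') := by
        rw [Fin.sum_univ_castSucc (f := vfun)]
        have h8 : (∑ j : Fin d', v' j) = ∑ j : Fin d', vfun (Fin.castSucc j) :=
          Finset.sum_congr rfl fun j _ => hv'app j
        rw [h8]; ring
      rw [hsum', hvtotal]
      have := hvf_nonneg (Fin.last d') hml
      linarith
    have hfeas := eventually_feasible d' η₁ v' hη₁ hv1 hv2
    have h00 : η₁ + (0:ℝ) • v' = η₁ := by simp
    have hmono_η : ∀ᶠ s in nhdsWithin (0:ℝ) (Set.Ioi 0),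
        ψ (t₁, η₁ + s • v') ≤ ψ (t₁, η₁ + (0:ℝ) • v') := by
      filter_upwards [hfeas] with s hs
      rw [h00]
      exact hzmax ⟨ht₁, hs⟩
    have hderiv_η : HasDerivAt (fun s : ℝ => ψ (t₁, η₁ + s • v'))
        (L₁ (0, v') - L₂ (0, v')) 0 := by
      have h4 := ((hL₁d v').sub (hL₂d v')).sub_const (ε * (T - t₁))
      simpa [hψdef] using h4
    have key_η : L₁ (0, v') - L₂ (0, v') ≤ 0 := slope_nonpos hderiv_η hmono_η
    -- identify the inner product
    have hgrad₁ : ∀ v : EuclideanSpace ℝ (Fin (d'+1-1)),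
        (∑ j : Fin d', p₁ j * v j) = L₁ (0, v) := by
      intro v
      rw [← hL₁g v]
      exact (inner_eq_sum d' p₁ v).symm
    have hgrad₂ : ∀ v : EuclideanSpace ℝ (Fin (d'+1-1)),
        (∑ j : Fin d', p₂ j * v j) = L₂ (0, v) := by
      intro v
      rw [← hL₂g v]
      exact (inner_eq_sum d' p₂ v).symm
    have hinner : L₁ (0, v') - L₂ (0, v') = ∑ j : Fin d', (p₁ j - p₂ j) * v' j := by
      rw [← hgrad₁ v', ← hgrad₂ v', ← Finset.sum_sub_distrib]
      exact Finset.sum_congr rfl fun j _ => by ring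
    have hsplit : ∑ k, tq k * vfun k = ∑ j : Fin d', (p₁ j - p₂ j) * v' j := by
      rw [Fin.sum_univ_castSucc (f := fun k => tq k * vfun k)]
      have hlast : tq (Fin.last d') = 0 := by
        simp only [htqdef]
        rw [dif_neg (by simp)]
      rw [hlast, zero_mul, add_zero]
      apply Finset.sum_congr rfl
      intro j _
      rw [hv'app]
      have : tq (Fin.castSucc j) = p₁ j - p₂ j := by
        simp only [htqdef]
        rw [dif_pos (by simpa using j.isLt : ((Fin.castSucc j : Fin (d'+1)) : ℕ) < d'+1-1)]
        congr 1 <;> exact congrArg _ (Fin.ext (by simp))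
      rw [this]
    -- final contradiction
    have hfinal : (0:ℝ) ≤ L₁ (1, 0) - L₂ (1, 0) := by
      have h5 : ∑ k, tq k * vfun k ≤ 0 := by
        rw [hsplit, ← hinner]; exact key_η
      linarith [hsum_ineq]
    linarith
  -- conclude from hsuf
  by_contra hcon
  push_neg at hcon
  have hδ : 0 < V₁ t₀ η₀ - V₂ t₀ η₀ := sub_pos.mpr hcon
  have hden : (0:ℝ) < 2 * (T + 1) := by linarith
  have hε := hsuf ((V₁ t₀ η₀ - V₂ t₀ η₀) / (2 * (T + 1))) (div_pos hδ hden)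
  have h1 : T - t₀ ≤ T := by linarith [ht₀.1]
  have h2 : (0:ℝ) ≤ T - t₀ := by linarith [ht₀.2]
  rw [div_mul_eq_mul_div, le_div_iff₀ hden] at hε
  nlinarith [hδ, h1, h2]

end KeyLemma
/-- uniqueness of classical solutions: under Assumptions (A) and (B), the
transformed HJB equation has at most one classical solution with a given terminal
condition `Ĝ`. -/
theorem hjb_classical_uniqueness (d : ℕ) (hd : 2 ≤ d) (T : ℝ) (hT : 0 < T) (M : ℝ)
    (hM : 0 < M)
    (f : ℝ → Fin d → EuclideanSpace ℝ (Fin d) → EuclideanSpace ℝ (Fin d) → ℝ)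
    (hfA : AssumptionA d T M f) (hfB : AssumptionB d T M f)
    (g : Fin d → EuclideanSpace ℝ (Fin d) → ℝ) (hg : ∀ i, ContinuousOn (g i) (simplexSet d))
    (V₁ V₂ : ℝ → EuclideanSpace ℝ (Fin (d - 1)) → ℝ)
    (hV₁ : hatC1OnNbhd d T V₁) (hV₂ : hatC1OnNbhd d T V₂)
    (hV₁pde : ∀ t ∈ Set.Icc (0:ℝ) T, ∀ η ∈ hatSimplexSet d, hatHJBop d M f V₁ t η = 0)
    (hV₂pde : ∀ t ∈ Set.Icc (0:ℝ) T, ∀ η ∈ hatSimplexSet d, hatHJBop d M f V₂ t η = 0)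
    (hV₁term : ∀ η ∈ hatSimplexSet d, V₁ T η = hatG d g η)
    (hV₂term : ∀ η ∈ hatSimplexSet d, V₂ T η = hatG d g η) :
    ∀ t ∈ Set.Icc (0:ℝ) T, ∀ η ∈ hatSimplexSet d, V₁ t η = V₂ t η := by
  obtain ⟨d', rfl⟩ : ∃ d', d = d' + 1 := ⟨d - 1, by omega⟩
  have hfc : ∀ (i : Fin (d'+1)) (t : ℝ), t ∈ Set.Icc (0:ℝ) T → ∀ m ∈ simplexSet (d'+1),
      Continuous (fun a => f t i a m) :=
    fun i t ht m hm => (hfB.1 i t ht m hm).continuous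
  have h12 := key d' T hT M hM f hfc V₁ V₂ hV₁ hV₂ hV₁pde hV₂pde
    (fun η hη => by rw [hV₁term η hη, hV₂term η hη])
  have h21 := key d' T hT M hM f hfc V₂ V₁ hV₂ hV₁ hV₂pde hV₁pde
    (fun η hη => by rw [hV₁term η hη, hV₂term η hη])
  intro t ht η hη
  exact le_antisymm (h12 t ht η hη) (h21 t ht η hη)
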